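/- Let W be a finite antipodal set in ℝ^k with m elements whose affine span is all of ℝ^k (so conv(W) has positive Lebesgue measure). Then for every real number a with 0 < a < 1/2, one has m · a^k · vol(conv W) ≤ vol(conv W); consequently m ≤ a^{−k} for every a ∈ (0, 1/2), and hence m ≤ 2^k. -/

import Mathlib

open MeasureTheory AffineMap Set Module

/-!
For `x ≠ y` in an antipodal set `W`, a functional `f` squeezes `conv W` into the slab
`f x ≤ f ≤ f y`; the copy of `conv W` shrunk by `a < 1/2` towards `x` lies in the lower part
`f < f x + (f y - f x) / 2` and the one shrunk towards `y` in the upper part, so the copies are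
pairwise disjoint. By convexity they all lie in `conv W`, and each has volume `a ^ k · vol(conv W)`.
Letting `a → 1/2` gives `#W ≤ 2 ^ k`.
-/

theorem LinearMap.map_homothety {𝕜 E : Type*} [CommRing 𝕜] [AddCommGroup E] [Module 𝕜 E]
    (f : E →ₗ[𝕜] 𝕜) (x : E) (a : 𝕜) (c : E) : f (homothety x a c) = a * (f c - f x) + f x := by
  simp only [homothety_apply, vsub_eq_sub, vadd_eq_add, map_add, map_smul, map_sub, smul_eq_mul]

def IsAntipodal (𝕜 : Type*) {E : Type*} [Semiring 𝕜] [Preorder 𝕜] [AddCommMonoid E]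
    [Module 𝕜 E] (W : Set E) : Prop :=
  ∀ x ∈ W, ∀ y ∈ W, x ≠ y →
    ∃ f : E →ₗ[𝕜] 𝕜, f ≠ 0 ∧ f x < f y ∧ ∀ w ∈ W, f x ≤ f w ∧ f w ≤ f y

section Homothety

variable {𝕜 E : Type*} [Field 𝕜] [LinearOrder 𝕜] [IsStrictOrderedRing 𝕜]
  [AddCommGroup E] [Module 𝕜 E]

theorem Convex.image_homothety_subset {s : Set E} (hs : Convex 𝕜 s) {x : E} (hx : x ∈ s)
    {a : 𝕜} (ha : a ∈ Icc 0 1) : homothety x a '' s ⊆ s := by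
  rintro _ ⟨c, hc, rfl⟩
  exact hs.lineMap_mem hx hc ha

theorem disjoint_image_homothety_of_mapsTo_Icc {f : E →ₗ[𝕜] 𝕜} {s : Set E} {x y : E}
    (hs : MapsTo f s (Icc (f x) (f y))) (hxy : f x < f y) {a : 𝕜} (ha : a < 1 / 2) :
    Disjoint (homothety x a '' s) (homothety y a '' s) := by
  refine disjoint_left.2 ?_
  rintro _ ⟨c, hc, rfl⟩ ⟨d, hd, hdc⟩
  have hfc := hs hc
  have hfd := hs hd
  have heq := congrArg f hdc
  rw [f.map_homothety, f.map_homothety] at heq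
  -- for `a ≤ 0` the two copies are reflected to opposite sides outside the slab
  rcases le_or_gt a 0 with ha0 | ha0
  · nlinarith [hfc.1, hfd.2]
  · nlinarith [hfc.2, hfd.1]

theorem IsAntipodal.pairwiseDisjoint_image_homothety {W : Set E} (hW : IsAntipodal 𝕜 W)
    {a : 𝕜} (ha : a < 1 / 2) :
    W.PairwiseDisjoint fun x ↦ homothety x a '' convexHull 𝕜 W := by
  intro x hx y hy hxy
  obtain ⟨f, -, hfxy, hbound⟩ := hW x hx y hy hxy
  exact disjoint_image_homothety_of_mapsTo_Icc
    (convexHull_min hbound ((convex_Icc _ _).linear_preimage f)) hfxy ha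

end Homothety

section Packing

variable {E : Type*} [NormedAddCommGroup E] [NormedSpace ℝ E] [MeasurableSpace E] [BorelSpace E]
  [FiniteDimensional ℝ E] (μ : Measure E) [μ.IsAddHaarMeasure]

theorem IsCompact.card_mul_pow_mul_measureReal_le {s : Set E} (hs : IsCompact s) {W : Finset E}
    {a : ℝ} (hdisj : (W : Set E).PairwiseDisjoint fun x ↦ homothety x a '' s)
    (hsub : ∀ x ∈ W, homothety x a '' s ⊆ s) :
    W.card * |a| ^ finrank ℝ E * μ.real s ≤ μ.real s := by
  have hmeas (x : E) : MeasurableSet (homothety x a '' s) :=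
    (hs.image (homothety_continuous x a)).isClosed.measurableSet
  have hpack : (W.card : ENNReal) * (ENNReal.ofReal (|a| ^ finrank ℝ E) * μ s) ≤ μ s :=
    calc (W.card : ENNReal) * (ENNReal.ofReal (|a| ^ finrank ℝ E) * μ s)
        = ∑ x ∈ W, μ (homothety x a '' s) := by
          simp only [Measure.addHaar_image_homothety, abs_pow, Finset.sum_const, nsmul_eq_mul]
      _ = μ (⋃ x ∈ W, homothety x a '' s) :=
          (measure_biUnion_finset hdisj fun x _ ↦ hmeas x).symm
      _ ≤ μ s := measure_mono (iUnion₂_subset hsub)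
  have := ENNReal.toReal_mono hs.measure_lt_top.ne hpack
  rwa [ENNReal.toReal_mul, ENNReal.toReal_mul, ENNReal.toReal_ofReal (by positivity),
    ENNReal.toReal_natCast, ← mul_assoc] at this

end Packing

theorem le_inv_pow_of_forall_lt {x c : ℝ} (k : ℕ) (hc : 0 < c)
    (h : ∀ a, 0 < a → a < c → x ≤ a⁻¹ ^ k) : x ≤ c⁻¹ ^ k :=
  ge_of_tendsto (((continuousAt_inv₀ hc.ne').pow k).tendsto.mono_left nhdsWithin_le_nhds)
    (by filter_upwards [Ioo_mem_nhdsLT hc] with a ha using h a ha.1 ha.2)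

/-- The volume-packing inequality for a full-dimensional antipodal set `W` in `ℝ^k`:
for every `0 < a < 1/2` one has `m * a ^ k * vol(conv W) ≤ vol(conv W)` and
`m ≤ a⁻¹ ^ k`, hence `m ≤ 2 ^ k`, where `m` is the number of points of `W`. -/
theorem antipodal_volume_packing (k : ℕ) (W : Finset (EuclideanSpace ℝ (Fin k)))
    (hW : ∀ x ∈ W, ∀ y ∈ W, x ≠ y →
      ∃ f : EuclideanSpace ℝ (Fin k) →ₗ[ℝ] ℝ, f ≠ 0 ∧ f x < f y ∧
        ∀ w ∈ W, f x ≤ f w ∧ f w ≤ f y)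
    (hspan : affineSpan ℝ (W : Set (EuclideanSpace ℝ (Fin k))) = ⊤) :
    (∀ a : ℝ, 0 < a → a < 1 / 2 →
      (W.card : ℝ) * a ^ k *
          (volume (convexHull ℝ (W : Set (EuclideanSpace ℝ (Fin k))))).toReal ≤
        (volume (convexHull ℝ (W : Set (EuclideanSpace ℝ (Fin k))))).toReal ∧
      (W.card : ℝ) ≤ a⁻¹ ^ k) ∧
    W.card ≤ 2 ^ k := by
  have hW : IsAntipodal ℝ (W : Set (EuclideanSpace ℝ (Fin k))) := hW
  set C := convexHull ℝ (W : Set (EuclideanSpace ℝ (Fin k)))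
  have hC : IsCompact C := W.finite_toSet.isCompact_convexHull (𝕜 := ℝ)
  have hvol : 0 < volume.real C := ENNReal.toReal_pos (Measure.measure_pos_of_nonempty_interior _
    (interior_convexHull_nonempty_iff_affineSpan_eq_top.2 hspan)).ne' hC.measure_lt_top.ne
  have hpack (a : ℝ) (ha : 0 < a) (ha2 : a < 1 / 2) :
      (W.card : ℝ) * a ^ k * volume.real C ≤ volume.real C := by
    simpa [abs_of_pos ha] using hC.card_mul_pow_mul_measureReal_le volume
      (hW.pairwiseDisjoint_image_homothety ha2) fun x hx ↦
        (convex_convexHull ℝ _).image_homothety_subset (subset_convexHull ℝ _ hx)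
          ⟨ha.le, by linarith⟩
  have hcard (a : ℝ) (ha : 0 < a) (ha2 : a < 1 / 2) : (W.card : ℝ) ≤ a⁻¹ ^ k := by
    rw [inv_pow, ← one_div, le_div_iff₀ (by positivity)]
    exact le_of_mul_le_mul_right (by simpa using hpack a ha ha2) hvol
  refine ⟨fun a ha ha2 ↦ ⟨hpack a ha ha2, hcard a ha ha2⟩, ?_⟩
  have h2 := le_inv_pow_of_forall_lt k (by norm_num) hcard
  rw [one_div, inv_inv] at h2
  exact_mod_cast h2
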